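/- arXiv:2112.10711 — 7 statements merged into one kernel-verified Lean document; each statement's English description precedes it below -/
import Mathlib

section
/- For every 0 < ε ≤ 1/2 and every A in S(ε), the matrix γ(A)A - I, where γ(A) = tr A / |A|² and I is the 2×2 identity, satisfies |γ(A)A - I| ≤ sqrt(1 - δ(ε)) in the Frobenius norm, with δ(ε) = 2ε(1-ε)/(ε² + (1-ε)²). -/
noncomputable def frob (A : Matrix (Fin 2) (Fin 2) ℝ) : ℝ :=
  Real.sqrt (∑ i, ∑ j, (A i j) ^ 2)

def Sset (s : ℝ) : Set (Matrix (Fin 2) (Fin 2) ℝ) :=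
  {A | A.PosSemidef ∧ A.trace = 1 ∧
    (A - s • (1 : Matrix (Fin 2) (Fin 2) ℝ)).PosSemidef}

/-- The scaling function `γ(A) = tr A / |A|²`. -/
noncomputable def gammaScale (A : Matrix (Fin 2) (Fin 2) ℝ) : ℝ :=
  A.trace / frob A ^ 2

/-!
Since `|γA - I|² = 2 - (tr A)² / |A|²`, everything reduces to an upper bound on `|A|²`.
For symmetric `A` with `tr A = 1` we have `|A|² = 1 - 2 det A`, and positive semidefiniteness of
`A - εI` gives `det A - ε + ε² = det (A - εI) ≥ 0`, so `|A|² ≤ ε² + (1 - ε)²`.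
-/

open Matrix

section Frobenius

variable (A : Matrix (Fin 2) (Fin 2) ℝ)

theorem frob_nonneg : 0 ≤ frob A := Real.sqrt_nonneg _

theorem frob_sq : frob A ^ 2 = A 0 0 ^ 2 + A 0 1 ^ 2 + A 1 0 ^ 2 + A 1 1 ^ 2 := by
  rw [frob, Real.sq_sqrt (by positivity)]
  simp only [Fin.sum_univ_two]
  ring

theorem trace_sq_le_two_mul_frob_sq : A.trace ^ 2 ≤ 2 * frob A ^ 2 := by
  rw [frob_sq, trace_fin_two]
  nlinarith [sq_nonneg (A 0 0 - A 1 1), sq_nonneg (A 0 1), sq_nonneg (A 1 0)]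

theorem frob_sq_eq_trace_sq_sub_two_mul_det (hA : A.IsSymm) :
    frob A ^ 2 = A.trace ^ 2 - 2 * A.det := by
  have hsymm : A 1 0 = A 0 1 := hA.apply 0 1
  rw [frob_sq, trace_fin_two, det_fin_two, hsymm]
  ring

theorem frob_smul_sub_one_sq (c : ℝ) :
    frob (c • A - 1) ^ 2 = c ^ 2 * frob A ^ 2 - 2 * c * A.trace + 2 := by
  simp only [frob_sq, trace_fin_two, Matrix.sub_apply, Matrix.smul_apply, smul_eq_mul,
    one_apply_eq, one_apply_ne zero_ne_one, one_apply_ne one_ne_zero]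
  ring

theorem frob_gammaScale_smul_sub_one_sq (hA : frob A ≠ 0) :
    frob (gammaScale A • A - 1) ^ 2 = 2 - A.trace ^ 2 / frob A ^ 2 := by
  rw [frob_smul_sub_one_sq, gammaScale]
  field_simp
  ring

end Frobenius

theorem Matrix.det_fin_two_sub_smul_one {R : Type*} [CommRing R] (A : Matrix (Fin 2) (Fin 2) R)
    (s : R) : (A - s • (1 : Matrix (Fin 2) (Fin 2) R)).det = A.det - s * A.trace + s ^ 2 := by
  simp only [det_fin_two, trace_fin_two, Matrix.sub_apply, Matrix.smul_apply, smul_eq_mul,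
    one_apply_eq, one_apply_ne zero_ne_one, one_apply_ne one_ne_zero]
  ring

theorem frob_sq_le_of_mem_Sset {s : ℝ} {A : Matrix (Fin 2) (Fin 2) ℝ} (hA : A ∈ Sset s) :
    frob A ^ 2 ≤ s ^ 2 + (1 - s) ^ 2 := by
  obtain ⟨hpsd, htr, hpsd_sub⟩ := hA
  have hdet : 0 ≤ A.det - s * A.trace + s ^ 2 :=
    A.det_fin_two_sub_smul_one s ▸ hpsd_sub.det_nonneg
  rw [htr] at hdet
  rw [frob_sq_eq_trace_sq_sub_two_mul_det A hpsd.isHermitian, htr]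
  linarith

theorem stmt4_general (ε : ℝ)
    (A : Matrix (Fin 2) (Fin 2) ℝ) (hA : A ∈ Sset ε) :
    frob (gammaScale A • A - (1 : Matrix (Fin 2) (Fin 2) ℝ)) ≤
      Real.sqrt (1 - 2 * ε * (1 - ε) / (ε ^ 2 + (1 - ε) ^ 2)) := by
  have htr : A.trace = 1 := hA.2.1
  have hle := frob_sq_le_of_mem_Sset hA
  have hpos : 0 < frob A ^ 2 := by nlinarith [trace_sq_le_two_mul_frob_sq A]
  have hne : frob A ≠ 0 := fun h => by simp [h] at hpos
  have hD : 0 < ε ^ 2 + (1 - ε) ^ 2 := hpos.trans_le hle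
  have hrhs : 1 - 2 * ε * (1 - ε) / (ε ^ 2 + (1 - ε) ^ 2) = 2 - 1 / (ε ^ 2 + (1 - ε) ^ 2) := by
    field_simp
    ring
  rw [← Real.sqrt_sq (frob_nonneg _), frob_gammaScale_smul_sub_one_sq A hne, htr,
    hrhs, one_pow]
  gcongr

theorem stmt4 (ε : ℝ) (hε : 0 < ε) (hε' : ε ≤ 1 / 2)
    (A : Matrix (Fin 2) (Fin 2) ℝ) (hA : A ∈ Sset ε) :
    frob (gammaScale A • A - (1 : Matrix (Fin 2) (Fin 2) ℝ)) ≤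
      Real.sqrt (1 - 2 * ε * (1 - ε) / (ε ^ 2 + (1 - ε) ^ 2)) :=
  stmt4_general ε A hA
end

section
/- Let 0 < ε ≤ 1/2, x a point, f a nonnegative function, and define F_ε(f;x,M) = sup over A in S(ε) of (-A:M + 2·sqrt(f(x)·det A)). Then for all symmetric 2×2 matrices M and positive semidefinite symmetric N, one has ε|N| ≤ F_ε(f;x,M) - F_ε(f;x,M+N) ≤ sqrt(ε² + (1-ε)²)·|N|. -/
/-- Frobenius inner product `A : M`. -/
def finner (A M : Matrix (Fin 2) (Fin 2) ℝ) : ℝ :=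
  ∑ i, ∑ j, A i j * M i j

/-- `F_ε(f;x,M)` with `fx = f(x)`. -/
noncomputable def Feps (ε fx : ℝ) (M : Matrix (Fin 2) (Fin 2) ℝ) : ℝ :=
  sSup ((fun A => -(finner A M) + 2 * Real.sqrt (fx * A.det)) '' Sset ε)

/-!
Since the determinant term does not involve `M`, the difference `F_ε(M) - F_ε(M + N)` lies
between the infimum and the supremum of `A : N` over `A ∈ S(ε)`. For such `A`,
`A : N = (A - εI) : N + ε tr N ≥ ε tr N ≥ ε |N|`, because the Frobenius product of two positive
semidefinite matrices is nonnegative and `|N| ≤ tr N` for positive semidefinite `N`. In the other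
direction Cauchy–Schwarz gives `A : N ≤ |A| |N|`, and `|A|² ≤ ε² + (1 - ε)²` on `S(ε)`.
-/

lemma csSup_image_sub_csSup_image_le {α : Type*} {S : Set α} (hS : S.Nonempty) {f g : α → ℝ}
    (hg : BddAbove (g '' S)) {c : ℝ} (h : ∀ a ∈ S, f a - g a ≤ c) :
    sSup (f '' S) - sSup (g '' S) ≤ c := by
  suffices sSup (f '' S) ≤ sSup (g '' S) + c by linarith
  refine csSup_le (hS.image f) ?_
  rintro _ ⟨a, ha, rfl⟩
  linarith [h a ha, le_csSup hg (Set.mem_image_of_mem g ha)]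

lemma Matrix.PosSemidef.fin_two_entries {P : Matrix (Fin 2) (Fin 2) ℝ} (hP : P.PosSemidef) :
    P 1 0 = P 0 1 ∧ 0 ≤ P 0 0 ∧ 0 ≤ P 1 1 ∧ P 0 1 ^ 2 ≤ P 0 0 * P 1 1 := by
  have hsymm : P 1 0 = P 0 1 := by simpa using hP.isHermitian.apply 0 1
  have hdet := hP.det_nonneg
  rw [det_fin_two, hsymm] at hdet
  exact ⟨hsymm, hP.diag_nonneg, hP.diag_nonneg, by linarith⟩

open Matrix

lemma finner_fin_two (A M : Matrix (Fin 2) (Fin 2) ℝ) :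
    finner A M = A 0 0 * M 0 0 + A 0 1 * M 0 1 + A 1 0 * M 1 0 + A 1 1 * M 1 1 := by
  simp only [finner, Fin.sum_univ_two]; ring

lemma frob_fin_two (A : Matrix (Fin 2) (Fin 2) ℝ) :
    frob A = √(A 0 0 ^ 2 + A 0 1 ^ 2 + A 1 0 ^ 2 + A 1 1 ^ 2) := by
  simp only [frob, Fin.sum_univ_two]; ring_nf

lemma finner_add_right (A M N : Matrix (Fin 2) (Fin 2) ℝ) :
    finner A (M + N) = finner A M + finner A N := by
  simp only [finner, Matrix.add_apply, mul_add, Finset.sum_add_distrib]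

lemma finner_neg_right (A M : Matrix (Fin 2) (Fin 2) ℝ) : finner A (-M) = -finner A M := by
  simp only [finner, Matrix.neg_apply, mul_neg, Finset.sum_neg_distrib]

lemma frob_neg (M : Matrix (Fin 2) (Fin 2) ℝ) : frob (-M) = frob M := by
  simp [frob]

lemma finner_le_frob_mul_frob (A M : Matrix (Fin 2) (Fin 2) ℝ) :
    finner A M ≤ frob A * frob M := by
  simpa only [finner, frob, ← Finset.sum_product', Finset.univ_product_univ] using
    Real.sum_mul_le_sqrt_mul_sqrt Finset.univ (fun p : Fin 2 × Fin 2 => A p.1 p.2)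
      (fun p => M p.1 p.2)

lemma finner_nonneg {P Q : Matrix (Fin 2) (Fin 2) ℝ} (hP : P.PosSemidef) (hQ : Q.PosSemidef) :
    0 ≤ finner P Q := by
  obtain ⟨hPs, hP0, hP1, hPd⟩ := hP.fin_two_entries
  obtain ⟨hQs, hQ0, hQ1, hQd⟩ := hQ.fin_two_entries
  rw [finner_fin_two, hPs, hQs]
  -- `(2 P₀₁ Q₀₁)² ≤ 4 P₀₀P₁₁Q₀₀Q₁₁ ≤ (P₀₀Q₀₀ + P₁₁Q₁₁)²`
  have hprod : (P 0 1 * Q 0 1) ^ 2 ≤ (P 0 0 * Q 0 0) * (P 1 1 * Q 1 1) := by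
    nlinarith [mul_le_mul hPd hQd (sq_nonneg _) (mul_nonneg hP0 hP1)]
  nlinarith [sq_nonneg (P 0 0 * Q 0 0 - P 1 1 * Q 1 1), mul_nonneg hP0 hQ0, mul_nonneg hP1 hQ1]

lemma frob_le_trace {N : Matrix (Fin 2) (Fin 2) ℝ} (hN : N.PosSemidef) : frob N ≤ N.trace := by
  obtain ⟨hsymm, h0, h1, hd⟩ := hN.fin_two_entries
  rw [frob_fin_two, trace_fin_two, hsymm, Real.sqrt_le_iff]
  constructor <;> nlinarith

lemma frob_le_of_mem_Sset {ε : ℝ} {A : Matrix (Fin 2) (Fin 2) ℝ} (hA : A ∈ Sset ε) :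
    frob A ≤ √(ε ^ 2 + (1 - ε) ^ 2) := by
  obtain ⟨-, htrace, hshift⟩ := hA
  obtain ⟨hsymm, -, -, hd⟩ := hshift.fin_two_entries
  rw [trace_fin_two] at htrace
  simp only [Matrix.sub_apply, Matrix.smul_apply, one_apply_eq, one_apply_ne zero_ne_one,
    one_apply_ne one_ne_zero, smul_eq_mul, mul_one, mul_zero, sub_zero] at hsymm hd
  rw [frob_fin_two, hsymm]
  exact Real.sqrt_le_sqrt (by nlinarith)

lemma finner_le_mul_frob_of_mem_Sset {ε : ℝ} {A : Matrix (Fin 2) (Fin 2) ℝ} (hA : A ∈ Sset ε)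
    (N : Matrix (Fin 2) (Fin 2) ℝ) : finner A N ≤ √(ε ^ 2 + (1 - ε) ^ 2) * frob N :=
  (finner_le_frob_mul_frob A N).trans
    (mul_le_mul_of_nonneg_right (frob_le_of_mem_Sset hA) (Real.sqrt_nonneg _))

lemma mul_frob_le_finner_of_mem_Sset {ε : ℝ} (hε : 0 ≤ ε) {A N : Matrix (Fin 2) (Fin 2) ℝ}
    (hA : A ∈ Sset ε) (hN : N.PosSemidef) : ε * frob N ≤ finner A N :=
  calc ε * frob N ≤ ε * N.trace := mul_le_mul_of_nonneg_left (frob_le_trace hN) hε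
    _ ≤ finner (A - ε • 1) N + ε * N.trace := le_add_of_nonneg_left (finner_nonneg hA.2.2 hN)
    _ = finner A N := by
      simp only [finner_fin_two, trace_fin_two, Matrix.sub_apply, Matrix.smul_apply, one_apply_eq,
        one_apply_ne zero_ne_one, one_apply_ne one_ne_zero, smul_eq_mul, mul_one, mul_zero]
      ring

lemma half_smul_one_mem_Sset {ε : ℝ} (hε : ε ≤ 1 / 2) :
    (1 / 2 : ℝ) • (1 : Matrix (Fin 2) (Fin 2) ℝ) ∈ Sset ε := by
  refine ⟨PosSemidef.one.smul (by norm_num), by simp, ?_⟩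
  rw [← sub_smul]
  exact PosSemidef.one.smul (by linarith)

lemma bddAbove_Feps_image (ε fx : ℝ) (M : Matrix (Fin 2) (Fin 2) ℝ) :
    BddAbove ((fun A => -(finner A M) + 2 * √(fx * A.det)) '' Sset ε) := by
  refine ⟨frob M + 2 * √|fx|, ?_⟩
  rintro _ ⟨A, hA, rfl⟩
  have hfrobA : frob A ≤ 1 := hA.2.1 ▸ frob_le_trace hA.1
  have hinner : -finner A M ≤ frob M := by
    rw [← finner_neg_right, ← frob_neg M]
    exact (finner_le_frob_mul_frob A (-M)).trans
      (mul_le_of_le_one_left (Real.sqrt_nonneg _) hfrobA)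
  have hdet : fx * A.det ≤ |fx| := by
    obtain ⟨hsymm, h0, h1, hd⟩ := hA.1.fin_two_entries
    have htrace := hA.2.1
    rw [trace_fin_two] at htrace
    have hdet_nonneg : 0 ≤ A.det := hA.1.det_nonneg
    have hdet_le_one : A.det ≤ 1 := by rw [det_fin_two, hsymm]; nlinarith
    nlinarith [le_abs_self fx, abs_nonneg fx]
  dsimp only
  linarith [Real.sqrt_le_sqrt hdet]

theorem stmt5_general (ε fx : ℝ) (hε : 0 < ε) (hε' : ε ≤ 1 / 2)
    (M N : Matrix (Fin 2) (Fin 2) ℝ) (hN : N.PosSemidef) :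
    ε * frob N ≤ Feps ε fx M - Feps ε fx (M + N) ∧
    Feps ε fx M - Feps ε fx (M + N) ≤ Real.sqrt (ε ^ 2 + (1 - ε) ^ 2) * frob N := by
  have hS : (Sset ε).Nonempty := ⟨_, half_smul_one_mem_Sset hε'⟩
  have hdiff : ∀ A, (-finner A M + 2 * √(fx * A.det)) - (-finner A (M + N) + 2 * √(fx * A.det))
      = finner A N := fun A => by rw [finner_add_right]; ring
  constructor
  · have hlower := csSup_image_sub_csSup_image_le hS (bddAbove_Feps_image ε fx M)
      (c := -(ε * frob N)) fun A hA => by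
        rw [← neg_sub, hdiff]
        exact neg_le_neg (mul_frob_le_finner_of_mem_Sset hε.le hA hN)
    unfold Feps
    linarith
  · exact csSup_image_sub_csSup_image_le hS (bddAbove_Feps_image ε fx (M + N))
      fun A hA => (hdiff A).trans_le (finner_le_mul_frob_of_mem_Sset hA N)

/-- Uniform ellipticity of the regularized operator. -/
theorem stmt5 (ε fx : ℝ) (hε : 0 < ε) (hε' : ε ≤ 1 / 2) (hfx : 0 ≤ fx)
    (M N : Matrix (Fin 2) (Fin 2) ℝ) (hM : M.IsSymm) (hN : N.PosSemidef) :
    ε * frob N ≤ Feps ε fx M - Feps ε fx (M + N) ∧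
    Feps ε fx M - Feps ε fx (M + N) ≤ Real.sqrt (ε ^ 2 + (1 - ε) ^ 2) * frob N :=
  stmt5_general ε fx hε hε' M N hN
end

section
/- For nonnegative reals a and b and 0 < ε ≤ 1/2, the values F_ε with data a and b satisfy, for every symmetric 2×2 matrix M, |sup_{A∈S(ε)}(-A:M + 2√(a·det A)) - sup_{A∈S(ε)}(-A:M + 2√(b·det A))| ≤ |√a - √b| ≤ √|a - b|. -/
/-!
Since `√(c · det A) = √c · √(det A)` and `√(det A) ≤ 1/2` on `S(ε)`, the two objective functions
differ by at most `|√a - √b|` at every `A`, so their suprema do too. These are true suprema, not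
the junk value of `sSup`: `S(ε)` is nonempty for `ε ≤ 1/2` and its entries are bounded by `1`.
-/

open Matrix

section SupImage

variable {α : Type*} {s : Set α} {f g : α → ℝ} {c : ℝ}

lemma csSup_image_le_csSup_image_add (hs : s.Nonempty) (hg : BddAbove (g '' s))
    (h : ∀ x ∈ s, f x ≤ g x + c) : sSup (f '' s) ≤ sSup (g '' s) + c :=
  csSup_le (hs.image f) <| by
    rintro _ ⟨x, hx, rfl⟩
    exact (h x hx).trans (add_le_add_left (le_csSup hg ⟨x, hx, rfl⟩) c)

lemma abs_csSup_image_sub_csSup_image_le (hs : s.Nonempty) (hg : BddAbove (g '' s))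
    (h : ∀ x ∈ s, |f x - g x| ≤ c) : |sSup (f '' s) - sSup (g '' s)| ≤ c := by
  have hfg : ∀ x ∈ s, f x ≤ g x + c := fun x hx => by linarith [(abs_le.1 (h x hx)).2]
  have hgf : ∀ x ∈ s, g x ≤ f x + c := fun x hx => by linarith [(abs_le.1 (h x hx)).1]
  have hf : BddAbove (f '' s) := by
    obtain ⟨B, hB⟩ := hg
    refine ⟨B + c, ?_⟩
    rintro _ ⟨x, hx, rfl⟩
    linarith [hfg x hx, hB ⟨x, hx, rfl⟩]
  rw [abs_sub_le_iff]
  constructor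
  · linarith [csSup_image_le_csSup_image_add hs hg hfg]
  · linarith [csSup_image_le_csSup_image_add hs hf hgf]

end SupImage

lemma sq_sub_le_abs_sq_sub {x y : ℝ} (hx : 0 ≤ x) (hy : 0 ≤ y) : (x - y) ^ 2 ≤ |x ^ 2 - y ^ 2| := by
  rcases le_total y x with h | h
  · rw [abs_of_nonneg (by nlinarith)]; nlinarith
  · rw [abs_of_nonpos (by nlinarith)]; nlinarith

lemma Real.abs_sqrt_sub_sqrt_le_sqrt_abs_sub (a b : ℝ) : |√a - √b| ≤ √|a - b| := by
  refine Real.abs_le_sqrt ?_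
  have hsq := sq_sub_le_abs_sq_sub (Real.sqrt_nonneg a) (Real.sqrt_nonneg b)
  rw [Real.sq_sqrt', Real.sq_sqrt'] at hsq
  exact hsq.trans (abs_max_sub_max_le_abs a b 0)

lemma Matrix.PosSemidef.apply_one_zero {A : Matrix (Fin 2) (Fin 2) ℝ} (hA : A.PosSemidef) :
    A 1 0 = A 0 1 := by
  simpa using hA.1.apply 0 1

lemma Matrix.PosSemidef.sq_apply_zero_one_le {A : Matrix (Fin 2) (Fin 2) ℝ} (hA : A.PosSemidef) :
    A 0 1 ^ 2 ≤ A 0 0 * A 1 1 := by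
  have := hA.det_nonneg
  rw [det_fin_two, hA.apply_one_zero] at this
  nlinarith

lemma abs_finner_le {A : Matrix (Fin 2) (Fin 2) ℝ} (hA : ∀ i j, |A i j| ≤ 1)
    (M : Matrix (Fin 2) (Fin 2) ℝ) : |finner A M| ≤ ∑ i, ∑ j, |M i j| := by
  refine (Finset.abs_sum_le_sum_abs _ _).trans (Finset.sum_le_sum fun i _ => ?_)
  refine (Finset.abs_sum_le_sum_abs _ _).trans (Finset.sum_le_sum fun j _ => ?_)
  rw [abs_mul]
  exact mul_le_of_le_one_left (abs_nonneg _) (hA i j)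

namespace Sset

variable {ε : ℝ} {A : Matrix (Fin 2) (Fin 2) ℝ}

lemma nonempty (hε : ε ≤ 1 / 2) : (Sset ε).Nonempty := by
  refine ⟨(1 / 2 : ℝ) • 1, ?_, ?_, ?_⟩
  · exact PosSemidef.one.smul (by norm_num)
  · simp [trace_smul]
  · rw [← sub_smul]
    exact PosSemidef.one.smul (by linarith)

lemma diag_sum_eq_one (hA : A ∈ Sset ε) : A 0 0 + A 1 1 = 1 := by
  simpa [trace_fin_two] using hA.2.1

lemma two_mul_sqrt_det_le_one (hA : A ∈ Sset ε) : 2 * √A.det ≤ 1 := by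
  have htr := diag_sum_eq_one hA
  have hdet : A.det ≤ 1 / 4 := by
    rw [det_fin_two, hA.1.apply_one_zero]
    nlinarith [sq_nonneg (A 0 0 - A 1 1), sq_nonneg (A 0 1)]
  have : √A.det ≤ 1 / 2 := Real.sqrt_le_iff.2 ⟨by norm_num, by linarith⟩
  linarith

lemma abs_apply_le_one (hA : A ∈ Sset ε) (i j : Fin 2) : |A i j| ≤ 1 := by
  have h00 : 0 ≤ A 0 0 := hA.1.diag_nonneg
  have h11 : 0 ≤ A 1 1 := hA.1.diag_nonneg
  have htr := diag_sum_eq_one hA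
  have hoff : |A 0 1| ≤ 1 :=
    (sq_le_one_iff_abs_le_one _).1 (by nlinarith [hA.1.sq_apply_zero_one_le])
  fin_cases i <;> fin_cases j <;> simp [abs_le, hA.1.apply_one_zero, hoff] <;> constructor <;> linarith

end Sset

section Objective

variable {ε : ℝ} {A : Matrix (Fin 2) (Fin 2) ℝ}

lemma two_mul_sqrt_mul_det_le_sqrt (c : ℝ) (hA : A ∈ Sset ε) : 2 * √(c * A.det) ≤ √c := by
  rw [Real.sqrt_mul' c hA.1.det_nonneg]
  nlinarith [Sset.two_mul_sqrt_det_le_one hA, Real.sqrt_nonneg c]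

lemma bddAbove_objective (c : ℝ) (M : Matrix (Fin 2) (Fin 2) ℝ) :
    BddAbove ((fun A => -(finner A M) + 2 * √(c * A.det)) '' Sset ε) := by
  refine ⟨(∑ i, ∑ j, |M i j|) + √c, ?_⟩
  rintro _ ⟨A, hA, rfl⟩
  have := abs_finner_le (Sset.abs_apply_le_one hA) M
  linarith [neg_abs_le (finner A M), two_mul_sqrt_mul_det_le_sqrt c hA]

lemma abs_objective_sub_le (a b : ℝ) (M : Matrix (Fin 2) (Fin 2) ℝ) (hA : A ∈ Sset ε) :
    |(-(finner A M) + 2 * √(a * A.det)) - (-(finner A M) + 2 * √(b * A.det))| ≤ |√a - √b| := by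
  have hdiff : (-(finner A M) + 2 * √(a * A.det)) - (-(finner A M) + 2 * √(b * A.det))
      = 2 * √A.det * (√a - √b) := by
    rw [Real.sqrt_mul' a hA.1.det_nonneg, Real.sqrt_mul' b hA.1.det_nonneg]
    ring
  rw [hdiff, abs_mul, abs_of_nonneg (by positivity : (0 : ℝ) ≤ 2 * √A.det)]
  exact mul_le_of_le_one_left (abs_nonneg _) (Sset.two_mul_sqrt_det_le_one hA)

end Objective

theorem stmt7_general (ε a b : ℝ) (hε' : ε ≤ 1 / 2)
    (M : Matrix (Fin 2) (Fin 2) ℝ) :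
    |Feps ε a M - Feps ε b M| ≤ |Real.sqrt a - Real.sqrt b| ∧
    |Real.sqrt a - Real.sqrt b| ≤ Real.sqrt |a - b| :=
  ⟨abs_csSup_image_sub_csSup_image_le (Sset.nonempty hε') (bddAbove_objective b M)
      fun _ hA => abs_objective_sub_le a b M hA,
    Real.abs_sqrt_sub_sqrt_le_sqrt_abs_sub a b⟩

theorem stmt7 (ε a b : ℝ) (hε : 0 < ε) (hε' : ε ≤ 1 / 2)
    (ha : 0 ≤ a) (hb : 0 ≤ b) (M : Matrix (Fin 2) (Fin 2) ℝ) (hM : M.IsSymm) :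
    |Feps ε a M - Feps ε b M| ≤ |Real.sqrt a - Real.sqrt b| ∧
    |Real.sqrt a - Real.sqrt b| ≤ Real.sqrt |a - b| :=
  stmt7_general ε a b hε' M
end

section
/- Let M be a 2×2 symmetric matrix, ζ > 0, and 0 < ε ≤ 1/2. Assume max over A in S(0) of (-A:M + ζ·sqrt(det A)) = 0. Then this maximum is attained at some A in the subset S(ε) if and only if |M|² ≤ ((1-ε)² + ε²)·ζ²/(4ε(1-ε)). -/
open Matrix

theorem Matrix.posSemidef_fin_two_iff {a b c : ℝ} :
    (!![a, b; b, c]).PosSemidef ↔ 0 ≤ a ∧ 0 ≤ c ∧ b ^ 2 ≤ a * c := by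
  constructor
  · intro h
    have hdet := h.det_nonneg
    rw [det_fin_two_of] at hdet
    exact ⟨by simpa using h.diag_nonneg (i := 0), by simpa using h.diag_nonneg (i := 1),
      by linarith⟩
  · rintro ⟨ha, hc, hb⟩
    refine PosSemidef.of_dotProduct_mulVec_nonneg ?_ fun x => ?_
    · simp [isHermitian_iff_isSymm, IsSymm.ext_iff, Fin.forall_fin_two]
    · have hx : star x ⬝ᵥ (!![a, b; b, c] *ᵥ x) =
          a * x 0 ^ 2 + 2 * b * (x 0 * x 1) + c * x 1 ^ 2 := by
        simp [dotProduct, mulVec, Fin.sum_univ_two]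
        ring
      rw [hx]
      rcases ha.eq_or_lt with rfl | ha
      · obtain rfl : b = 0 := by nlinarith
        nlinarith [mul_nonneg hc (sq_nonneg (x 1))]
      · nlinarith [sq_nonneg (a * x 0 + b * x 1), mul_nonneg (sub_nonneg.2 hb) (sq_nonneg (x 1))]

theorem exists_eq_of_isSymm {A : Matrix (Fin 2) (Fin 2) ℝ} (hA : A.IsSymm) :
    ∃ a b c, A = !![a, b; b, c] :=
  ⟨A 0 0, A 0 1, A 1 1, (eta_fin_two A).trans (by rw [hA.apply 0 1])⟩

-- With `a + c = 1`, `(a - s)(c - s) - b² = det A - s(1 - s)`.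
theorem mem_Sset_iff {s a b c : ℝ} (hs₀ : 0 ≤ s) (hs : s ≤ 1 / 2) :
    !![a, b; b, c] ∈ Sset s ↔ a + c = 1 ∧ s * (1 - s) ≤ a * c - b ^ 2 := by
  have hsub : !![a, b; b, c] - s • (1 : Matrix (Fin 2) (Fin 2) ℝ) =
      !![a - s, b; b, c - s] := by
    simp [one_fin_two]
  change PosSemidef _ ∧ trace _ = 1 ∧ PosSemidef _ ↔ _
  rw [hsub, posSemidef_fin_two_iff, posSemidef_fin_two_iff, trace_fin_two_of]
  constructor
  · rintro ⟨-, htr, -, -, h⟩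
    exact ⟨htr, by nlinarith⟩
  · rintro ⟨htr, h⟩
    have hshift : 0 ≤ a - s ∧ 0 ≤ c - s := by
      constructor <;> nlinarith
    exact ⟨⟨by linarith, by linarith, by nlinarith⟩, htr, hshift.1, hshift.2, by nlinarith⟩

theorem mem_Sset_zero_iff {a b c : ℝ} :
    !![a, b; b, c] ∈ Sset 0 ↔ a + c = 1 ∧ 0 ≤ a * c - b ^ 2 := by
  simpa using mem_Sset_iff (a := a) (b := b) (c := c) le_rfl (by norm_num)

theorem Sset_subset_Sset_zero (s : ℝ) : Sset s ⊆ Sset 0 := fun _ hA =>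
  ⟨hA.1, hA.2.1, by simpa using hA.1⟩

theorem finner_fin_two_s8 (a b c p q r : ℝ) :
    finner !![a, b; b, c] !![p, q; q, r] = a * p + 2 * b * q + c * r := by
  simp [finner, Fin.sum_univ_two]
  ring

theorem neg_finner_add_mul_sqrt_det_fin_two (ζ a b c p q r : ℝ) :
    -finner !![a, b; b, c] !![p, q; q, r] + ζ * √(!![a, b; b, c]).det =
      ζ * √(a * c - b ^ 2) - (a * p + 2 * b * q + c * r) := by
  rw [finner_fin_two_s8, det_fin_two_of, sq]
  ring

theorem frob_sq_fin_two (p q r : ℝ) : frob !![p, q; q, r] ^ 2 = p ^ 2 + 2 * q ^ 2 + r ^ 2 := by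
  rw [frob, Real.sq_sqrt (by positivity)]
  simp [Fin.sum_univ_two]
  ring

theorem sq_le_four_mul_det_of_forall_le {p q r ζ : ℝ} (hζ : 0 < ζ)
    (h : ∀ a b c : ℝ, a + c = 1 → 0 ≤ a * c - b ^ 2 →
      ζ * √(a * c - b ^ 2) ≤ a * p + 2 * b * q + c * r) :
    0 < p + r ∧ ζ ^ 2 ≤ 4 * (p * r - q ^ 2) := by
  set ρ := √((p - r) ^ 2 + 4 * q ^ 2 + ζ ^ 2)
  have hρ : 0 < ρ := Real.sqrt_pos.2 (by positivity)
  have hρ2 : ρ ^ 2 = (p - r) ^ 2 + 4 * q ^ 2 + ζ ^ 2 := Real.sq_sqrt (by positivity)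
  -- In the coordinates `(a - c, 2b)` of a trace-one `A`, the test point is `-(p - r, 2q) / ρ`.
  have hdet : (1 - (p - r) / ρ) / 2 * ((1 + (p - r) / ρ) / 2) - (-q / ρ) ^ 2 =
      (ζ / (2 * ρ)) ^ 2 := by
    field_simp
    linear_combination hρ2
  have hval : (1 - (p - r) / ρ) / 2 * p + 2 * (-q / ρ) * q + (1 + (p - r) / ρ) / 2 * r =
      ((p + r) * ρ - (ρ ^ 2 - ζ ^ 2)) / (2 * ρ) := by
    field_simp
    linear_combination hρ2
  have htest := h _ (-q / ρ) _ (by ring) (hdet ▸ sq_nonneg _)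
  rw [hdet, Real.sqrt_sq (by positivity), hval, mul_div_assoc', ← sq,
    div_le_div_iff_of_pos_right (by positivity)] at htest
  have hρτ : ρ ≤ p + r := le_of_mul_le_mul_right (by nlinarith) hρ
  exact ⟨hρ.trans_le hρτ, by nlinarith⟩

theorem sq_mul_sq_inner_sub_four_mul_det_mul_det (a b c p q r : ℝ) :
    p ^ 2 * ((a * p + 2 * b * q + c * r) ^ 2 - 4 * (a * c - b ^ 2) * (p * r - q ^ 2)) =
      (p * (a * p + 2 * b * q + c * r) - 2 * (p * r - q ^ 2) * c) ^ 2 +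
        4 * (p * r - q ^ 2) * (p * b + q * c) ^ 2 := by
  ring

theorem eq_of_sq_inner_le_four_mul_det_mul_det {a b c p q r : ℝ} (hp : p ≠ 0)
    (hD : 0 < p * r - q ^ 2) (htr : a + c = 1)
    (h : (a * p + 2 * b * q + c * r) ^ 2 ≤ 4 * (a * c - b ^ 2) * (p * r - q ^ 2)) :
    a = r / (p + r) ∧ b = -q / (p + r) ∧ c = p / (p + r) := by
  have hsum : (p * (a * p + 2 * b * q + c * r) - 2 * (p * r - q ^ 2) * c) ^ 2 +
      4 * (p * r - q ^ 2) * (p * b + q * c) ^ 2 ≤ 0 := by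
    rw [← sq_mul_sq_inner_sub_four_mul_det_mul_det]
    exact mul_nonpos_of_nonneg_of_nonpos (sq_nonneg p) (by linarith)
  have h₁ : p * b + q * c = 0 := by
    have : 4 * (p * r - q ^ 2) * (p * b + q * c) ^ 2 = 0 :=
      le_antisymm
        (by nlinarith [sq_nonneg (p * (a * p + 2 * b * q + c * r) - 2 * (p * r - q ^ 2) * c)])
        (by positivity)
    simpa [hD.ne'] using this
  have h₂ : p * (a * p + 2 * b * q + c * r) - 2 * (p * r - q ^ 2) * c = 0 := by
    rw [h₁] at hsum
    simpa using hsum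
  have hac : p * a = r * c := by
    apply mul_left_cancel₀ hp
    linear_combination h₂ - 2 * q * h₁
  have hc : c * (p + r) = p := by linear_combination p * htr - hac
  have hτ : p + r ≠ 0 := fun hτ => hp (by rw [← hc, hτ, mul_zero])
  have ha : a * (p + r) = r := mul_left_cancel₀ hp (by linear_combination (p + r) * hac + r * hc)
  have hb : b * (p + r) = -q := mul_left_cancel₀ hp (by linear_combination (p + r) * h₁ - q * hc)
  exact ⟨eq_div_of_mul_eq hτ ha, eq_div_of_mul_eq hτ hb, eq_div_of_mul_eq hτ hc⟩

theorem eq_of_mul_sqrt_det_eq_inner {a b c p q r ζ : ℝ} (hζ : 0 < ζ) (hτ : 0 < p + r)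
    (hζD : ζ ^ 2 ≤ 4 * (p * r - q ^ 2)) (htr : a + c = 1) (hdet : 0 ≤ a * c - b ^ 2)
    (heq : ζ * √(a * c - b ^ 2) = a * p + 2 * b * q + c * r) :
    (a = r / (p + r) ∧ b = -q / (p + r) ∧ c = p / (p + r)) ∧ ζ ^ 2 = 4 * (p * r - q ^ 2) := by
  have hD : 0 < p * r - q ^ 2 := by nlinarith
  have hp : 0 < p := by nlinarith [sq_nonneg q]
  have hsq : (a * p + 2 * b * q + c * r) ^ 2 = ζ ^ 2 * (a * c - b ^ 2) := by
    rw [← heq, mul_pow, Real.sq_sqrt hdet]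
  obtain ⟨rfl, rfl, rfl⟩ := eq_of_sq_inner_le_four_mul_det_mul_det hp.ne' hD htr
    (by rw [hsq]; linarith [mul_le_mul_of_nonneg_right hζD hdet])
  refine ⟨⟨rfl, rfl, rfl⟩, ?_⟩
  field_simp at hsq
  exact mul_left_cancel₀ hD.ne' (by linear_combination -hsq)

theorem eq_of_mem_Sset_zero_of_eq_zero {A : Matrix (Fin 2) (Fin 2) ℝ} {p q r ζ : ℝ}
    (hζ : 0 < ζ) (hτ : 0 < p + r) (hζD : ζ ^ 2 ≤ 4 * (p * r - q ^ 2)) (hA : A ∈ Sset 0)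
    (hmax : -finner A !![p, q; q, r] + ζ * √A.det = 0) :
    A = !![r / (p + r), -q / (p + r); -q / (p + r), p / (p + r)] ∧
      ζ ^ 2 = 4 * (p * r - q ^ 2) := by
  obtain ⟨a, b, c, rfl⟩ := exists_eq_of_isSymm (isHermitian_iff_isSymm.1 hA.1.isHermitian)
  obtain ⟨htr, hdet⟩ := mem_Sset_zero_iff.1 hA
  rw [neg_finner_add_mul_sqrt_det_fin_two] at hmax
  obtain ⟨⟨rfl, rfl, rfl⟩, hζeq⟩ :=
    eq_of_mul_sqrt_det_eq_inner hζ hτ hζD htr hdet (by linarith)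
  exact ⟨rfl, hζeq⟩

theorem adjugate_div_trace_mem_Sset_iff {s p q r : ℝ} (hs₀ : 0 ≤ s) (hs : s ≤ 1 / 2)
    (hτ : 0 < p + r) :
    !![r / (p + r), -q / (p + r); -q / (p + r), p / (p + r)] ∈ Sset s ↔
      s * (1 - s) ≤ (p * r - q ^ 2) / (p + r) ^ 2 := by
  rw [mem_Sset_iff hs₀ hs, and_iff_right (by field_simp; ring),
    show r / (p + r) * (p / (p + r)) - (-q / (p + r)) ^ 2 = (p * r - q ^ 2) / (p + r) ^ 2 by
      field_simp]

theorem frob_sq_le_iff {p q r ζ ε : ℝ} (hε : 0 < ε) (hε₁ : ε < 1) (hτ : 0 < p + r)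
    (hζ : ζ ^ 2 = 4 * (p * r - q ^ 2)) :
    frob !![p, q; q, r] ^ 2 ≤ ((1 - ε) ^ 2 + ε ^ 2) * ζ ^ 2 / (4 * ε * (1 - ε)) ↔
      ε * (1 - ε) ≤ (p * r - q ^ 2) / (p + r) ^ 2 := by
  have he : 0 < ε * (1 - ε) := mul_pos hε (by linarith)
  rw [frob_sq_fin_two, hζ, le_div_iff₀ (by linarith), le_div_iff₀ (by positivity)]
  constructor <;> intro h <;> linarith

/-- Effect of the regularization: the maximum over `S(0)` is attained in `S(ε)`
iff `|M|² ≤ ((1-ε)² + ε²)ζ²/(4ε(1-ε))`. -/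
theorem stmt8 (M : Matrix (Fin 2) (Fin 2) ℝ) (hM : M.IsSymm)
    (ζ ε : ℝ) (hζ : 0 < ζ) (hε : 0 < ε) (hε' : ε ≤ 1 / 2)
    (hub : ∀ A ∈ Sset 0, -(finner A M) + ζ * Real.sqrt A.det ≤ 0)
    (hatt : ∃ A ∈ Sset 0, -(finner A M) + ζ * Real.sqrt A.det = 0) :
    (∃ A ∈ Sset ε, -(finner A M) + ζ * Real.sqrt A.det = 0) ↔
      frob M ^ 2 ≤ ((1 - ε) ^ 2 + ε ^ 2) * ζ ^ 2 / (4 * ε * (1 - ε)) := by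
  obtain ⟨p, q, r, rfl⟩ := exists_eq_of_isSymm hM
  obtain ⟨hτ, hζD⟩ : 0 < p + r ∧ ζ ^ 2 ≤ 4 * (p * r - q ^ 2) :=
    sq_le_four_mul_det_of_forall_le hζ fun a b c htr hdet => by
      have := hub _ (mem_Sset_zero_iff.2 ⟨htr, hdet⟩)
      rw [neg_finner_add_mul_sqrt_det_fin_two] at this
      linarith
  obtain ⟨A₀, hA₀, hA₀max⟩ := hatt
  obtain ⟨hA₀_eq, hζeq⟩ := eq_of_mem_Sset_zero_of_eq_zero hζ hτ hζD hA₀ hA₀max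
  rw [frob_sq_le_iff hε (by linarith) hτ hζeq, ← adjugate_div_trace_mem_Sset_iff hε.le hε' hτ,
    ← hA₀_eq]
  constructor
  · rintro ⟨A, hA, hAmax⟩
    rwa [(eq_of_mem_Sset_zero_of_eq_zero hζ hτ hζD (Sset_subset_Sset_zero ε hA) hAmax).1,
      ← hA₀_eq] at hA
  · exact fun h => ⟨A₀, h, hA₀max⟩
end

section
/- Let ζ > 0 and define φ: [0,1] → ℝ by φ(t) = -t·ρ₁ - (1-t)·ρ₂ + ζ·sqrt(t(1-t)), where ρ₁, ρ₂ are real numbers. If max over t in [0,1] of φ(t) = 0, then the unique maximizer t̄ lies in the open interval (0,1) and satisfies ρ₁ = (1-t̄)ζ/(2·sqrt(t̄(1-t̄))) and ρ₂ = t̄·ζ/(2·sqrt(t̄(1-t̄))). -/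
/-!
The function `φ` is strictly concave on `[0, 1]`, being affine plus `ζ` times the square root
of the strictly concave `t (1 - t)`; hence it has at most one maximizer. The maximizer is not an
endpoint: `φ 0 = 0` would force `ρ₂ = 0`, and then `φ t = ζ √(t (1 - t)) - t ρ₁ > 0` for small `t`
because the square root wins against a linear term; `t = 1` is symmetric. At an interior maximizer
`φ' = 0`, and together with `φ = 0` this linear system in `ρ₁, ρ₂` gives the two formulas.
-/

open Set Real

noncomputable def gain (ζ ρ₁ ρ₂ t : ℝ) : ℝ :=
  -t * ρ₁ - (1 - t) * ρ₂ + ζ * √(t * (1 - t))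

lemma strictConcaveOn_mul_one_sub : StrictConcaveOn ℝ univ fun t : ℝ => t * (1 - t) := by
  refine ⟨convex_univ, fun x _ y _ hxy a b ha hb hab => ?_⟩
  obtain rfl : b = 1 - a := by linarith
  have hgap : 0 < a * (1 - a) * (x - y) ^ 2 :=
    mul_pos (mul_pos ha hb) (sq_pos_iff.2 (sub_ne_zero.2 hxy))
  simp only [smul_eq_mul]
  nlinarith

lemma strictConcaveOn_sqrt_mul_one_sub :
    StrictConcaveOn ℝ (Icc 0 1) fun t : ℝ => √(t * (1 - t)) := by
  have himage : (fun t : ℝ => t * (1 - t)) '' Icc 0 1 ⊆ Ici 0 := by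
    rintro _ ⟨t, ht, rfl⟩
    exact mul_nonneg ht.1 (sub_nonneg.2 ht.2)
  have hconvex : Convex ℝ ((fun t : ℝ => t * (1 - t)) '' Icc 0 1) :=
    Real.convex_iff_isPreconnected.2 (isPreconnected_Icc.image _ (by fun_prop))
  exact (strictConcaveOn_sqrt.concaveOn.subset himage hconvex).comp_strictConcaveOn
    (strictConcaveOn_mul_one_sub.subset (subset_univ _) (convex_Icc 0 1))
    (strictMonoOn_sqrt.mono himage)

section gain

variable {ζ ρ₁ ρ₂ t : ℝ}

lemma strictConcaveOn_gain (hζ : 0 < ζ) : StrictConcaveOn ℝ (Icc 0 1) (gain ζ ρ₁ ρ₂) := by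
  refine ⟨convex_Icc 0 1, fun x hx y hy hxy a b ha hb hab => ?_⟩
  have hsqrt := strictConcaveOn_sqrt_mul_one_sub.2 hx hy hxy ha hb hab
  simp only [gain, smul_eq_mul] at hsqrt ⊢
  obtain rfl : b = 1 - a := by linarith
  nlinarith [mul_lt_mul_of_pos_left hsqrt hζ]

lemma gain_zero : gain ζ ρ₁ ρ₂ 0 = -ρ₂ := by
  simp [gain]

lemma gain_one_sub : gain ζ ρ₁ ρ₂ (1 - t) = gain ζ ρ₂ ρ₁ t := by
  simp only [gain, sub_sub_cancel, mul_comm (1 - t) t]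
  ring

lemma exists_mul_lt_mul_sqrt (hζ : 0 < ζ) (ρ : ℝ) :
    ∃ t ∈ Icc (0 : ℝ) 1, t * ρ < ζ * √(t * (1 - t)) := by
  have hd : 0 < ζ ^ 2 + ρ ^ 2 := by positivity
  -- this `t` makes `ζ ^ 2 * (t * (1 - t)) - (t * ρ) ^ 2 = t * ζ ^ 2 / 2`
  set t := ζ ^ 2 / (2 * (ζ ^ 2 + ρ ^ 2)) with ht
  have htd : t * (ζ ^ 2 + ρ ^ 2) = ζ ^ 2 / 2 := by rw [ht]; field_simp
  have ht0 : 0 < t := by positivity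
  have ht1 : t ≤ 1 / 2 := by rw [ht, div_le_iff₀ (by positivity)]; nlinarith
  refine ⟨t, ⟨ht0.le, by linarith⟩, ?_⟩
  have hsq : (t * ρ) ^ 2 < (ζ * √(t * (1 - t))) ^ 2 := by
    rw [mul_pow, mul_pow, sq_sqrt (by nlinarith)]
    nlinarith [mul_pos ht0 (pow_pos hζ 2)]
  exact (le_abs_self _).trans_lt (abs_lt_of_sq_lt_sq hsq (by positivity))

lemma gain_zero_ne_zero (hζ : 0 < ζ) (hle : ∀ t ∈ Icc (0 : ℝ) 1, gain ζ ρ₁ ρ₂ t ≤ 0) :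
    gain ζ ρ₁ ρ₂ 0 ≠ 0 := by
  intro h0
  rw [gain_zero, neg_eq_zero] at h0
  obtain ⟨t, ht, hlt⟩ := exists_mul_lt_mul_sqrt hζ ρ₁
  have hle_t := hle t ht
  simp only [gain, h0] at hle_t
  linarith

lemma gain_one_ne_zero (hζ : 0 < ζ) (hle : ∀ t ∈ Icc (0 : ℝ) 1, gain ζ ρ₁ ρ₂ t ≤ 0) :
    gain ζ ρ₁ ρ₂ 1 ≠ 0 := by
  have hle' : ∀ t ∈ Icc (0 : ℝ) 1, gain ζ ρ₂ ρ₁ t ≤ 0 := fun t ht => by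
    rw [← gain_one_sub]
    exact hle _ ⟨sub_nonneg.2 ht.2, sub_le_self _ ht.1⟩
  have hsymm : gain ζ ρ₁ ρ₂ 1 = gain ζ ρ₂ ρ₁ 0 := by simpa using gain_one_sub (t := 0)
  exact hsymm ▸ gain_zero_ne_zero hζ hle'

lemma mem_Ioo_of_gain_eq_zero (hζ : 0 < ζ) (hle : ∀ t ∈ Icc (0 : ℝ) 1, gain ζ ρ₁ ρ₂ t ≤ 0)
    (ht : t ∈ Icc (0 : ℝ) 1) (h0 : gain ζ ρ₁ ρ₂ t = 0) : t ∈ Ioo 0 1 := by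
  refine ⟨ht.1.lt_of_ne ?_, ht.2.lt_of_ne ?_⟩ <;> rintro rfl
  exacts [gain_zero_ne_zero hζ hle h0, gain_one_ne_zero hζ hle h0]

lemma hasDerivAt_gain (ht : t ∈ Ioo 0 1) :
    HasDerivAt (gain ζ ρ₁ ρ₂) (ρ₂ - ρ₁ + ζ * ((1 - 2 * t) / (2 * √(t * (1 - t))))) t := by
  have hprod : HasDerivAt (fun t : ℝ => t * (1 - t)) (1 - 2 * t) t :=
    ((hasDerivAt_id' t).mul ((hasDerivAt_id' t).const_sub 1)).congr_deriv (by ring)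
  have hsqrt := hprod.sqrt (mul_pos ht.1 (sub_pos.2 ht.2)).ne'
  have haffine := ((hasDerivAt_id' t).neg.mul_const ρ₁).sub
    (((hasDerivAt_id' t).const_sub 1).mul_const ρ₂)
  exact (haffine.add (hsqrt.const_mul ζ)).congr_deriv (by ring)

lemma rho_eq_of_isLocalMax_gain (ht : t ∈ Ioo 0 1) (h0 : gain ζ ρ₁ ρ₂ t = 0)
    (hmax : IsLocalMax (gain ζ ρ₁ ρ₂) t) :
    ρ₁ = (1 - t) * ζ / (2 * √(t * (1 - t))) ∧ ρ₂ = t * ζ / (2 * √(t * (1 - t))) := by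
  have hprod : 0 < t * (1 - t) := mul_pos ht.1 (sub_pos.2 ht.2)
  have hcrit := hmax.hasDerivAt_eq_zero (hasDerivAt_gain ht)
  set s := √(t * (1 - t))
  have hs : 0 < s := sqrt_pos.2 hprod
  have hs2 : s ^ 2 = t * (1 - t) := sq_sqrt hprod.le
  have hcrit' : (ρ₂ - ρ₁) * (2 * s) + ζ * (1 - 2 * t) = 0 := by
    field_simp at hcrit
    linarith
  simp only [gain] at h0
  constructor <;> rw [eq_div_iff (by positivity)]
  · linear_combination (t - 1) * hcrit' - 2 * s * h0 + 2 * ζ * hs2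
  · linear_combination t * hcrit' - 2 * s * h0 + 2 * ζ * hs2

end gain

/-- If the maximum of `φ(t) = -tρ₁ - (1-t)ρ₂ + ζ√(t(1-t))` over `[0,1]` is `0`,
then the unique maximizer lies in `(0,1)` and determines `ρ₁, ρ₂`. -/
theorem stmt9 (ζ ρ₁ ρ₂ : ℝ) (hζ : 0 < ζ)
    (φ : ℝ → ℝ)
    (hφ : ∀ t, φ t = -t * ρ₁ - (1 - t) * ρ₂ + ζ * Real.sqrt (t * (1 - t)))
    (hub : ∀ t ∈ Set.Icc (0 : ℝ) 1, φ t ≤ 0)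
    (hatt : ∃ t ∈ Set.Icc (0 : ℝ) 1, φ t = 0) :
    ∃ tb ∈ Set.Ioo (0 : ℝ) 1, φ tb = 0 ∧
      (∀ t ∈ Set.Icc (0 : ℝ) 1, φ t = 0 → t = tb) ∧
      ρ₁ = (1 - tb) * ζ / (2 * Real.sqrt (tb * (1 - tb))) ∧
      ρ₂ = tb * ζ / (2 * Real.sqrt (tb * (1 - tb))) := by
  obtain ⟨tb, htb, h0⟩ := hatt
  obtain rfl : φ = gain ζ ρ₁ ρ₂ := funext hφ
  have hmax_of_eq_zero : ∀ t, gain ζ ρ₁ ρ₂ t = 0 → IsMaxOn (gain ζ ρ₁ ρ₂) (Icc 0 1) t :=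
    fun t ht => isMaxOn_iff.2 fun s hs => ht ▸ hub s hs
  have hIoo := mem_Ioo_of_gain_eq_zero hζ hub htb h0
  refine ⟨tb, hIoo, h0, fun t ht ht0 => ?_, rho_eq_of_isLocalMax_gain hIoo h0 ?_⟩
  · exact (strictConcaveOn_gain hζ).eq_of_isMaxOn (hmax_of_eq_zero t ht0)
      (hmax_of_eq_zero tb h0) ht htb
  · exact (hmax_of_eq_zero tb h0).isLocalMax (Icc_mem_nhds hIoo.1 hIoo.2)
end

section
/- Let N be a 2×2 symmetric matrix with nonnegative eigenvalues ρ₁(N) ≤ ρ₂(N), and let 0 < ε ≤ 1/2. Then the infimum over A in S(ε) of the Frobenius inner product A:N equals (1-ε)·ρ₁(N) + ε·ρ₂(N), and in particular ε·|N| ≤ inf over A in S(ε) of A:N. -/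
lemma psd_quad {M : Matrix (Fin 2) (Fin 2) ℝ} (h : M.PosSemidef) (x0 x1 : ℝ) :
    0 ≤ M 0 0 * x0^2 + M 0 1 * x0 * x1 + M 1 0 * x0 * x1 + M 1 1 * x1^2 := by
  have h2 := h.dotProduct_mulVec_nonneg ![x0, x1]
  simp [dotProduct, Matrix.mulVec, Fin.sum_univ_two] at h2
  nlinarith [h2]

lemma psd_sym {M : Matrix (Fin 2) (Fin 2) ℝ} (h : M.PosSemidef) : M 1 0 = M 0 1 := by
  have := congrFun (congrFun h.1 0) 1
  simpa [Matrix.conjTranspose_apply] using this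

lemma psd_det {M : Matrix (Fin 2) (Fin 2) ℝ} (h : M.PosSemidef) :
    (M 0 1)^2 ≤ M 0 0 * M 1 1 := by
  have hs := psd_sym h
  have h00 : 0 ≤ M 0 0 := by have := psd_quad h 1 0; nlinarith [this]
  have h11 : 0 ≤ M 1 1 := by have := psd_quad h 0 1; nlinarith [this]
  rcases eq_or_lt_of_le h00 with h0 | h0
  · have := psd_quad h (-(M 1 1 + 1)) (M 0 1)
    rw [hs, ← h0] at this
    nlinarith [this, sq_nonneg (M 0 1)]
  · have := psd_quad h (M 0 1) (-(M 0 0))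
    rw [hs] at this
    nlinarith [this, h0]

lemma psd_of {M : Matrix (Fin 2) (Fin 2) ℝ} (hsym : M 1 0 = M 0 1)
    (h00 : 0 ≤ M 0 0) (h11 : 0 ≤ M 1 1) (hd : (M 0 1)^2 ≤ M 0 0 * M 1 1) :
    M.PosSemidef := by
  refine Matrix.PosSemidef.of_dotProduct_mulVec_nonneg ?_ ?_
  · ext i j
    fin_cases i <;> fin_cases j <;> simp [Matrix.conjTranspose_apply, hsym]
  · intro x
    have e : dotProduct (star x) (M.mulVec x) =
        M 0 0 * (x 0)^2 + M 0 1 * (x 0) * (x 1) + M 1 0 * (x 0) * (x 1) + M 1 1 * (x 1)^2 := by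
      simp [dotProduct, Matrix.mulVec, Fin.sum_univ_two]; ring
    rw [e, hsym]
    nlinarith [mul_nonneg (mul_nonneg h00 (sq_nonneg (x 0))) (mul_nonneg h11 (sq_nonneg (x 1))),
      sq_nonneg (M 0 0 * (x 0)^2 - M 1 1 * (x 1)^2),
      mul_nonneg (sub_nonneg.2 hd) (sq_nonneg ((x 0)*(x 1))),
      mul_nonneg h00 (sq_nonneg (x 0)), mul_nonneg h11 (sq_nonneg (x 1))]

set_option maxHeartbeats 1000000 in
/-- For psd `N` with eigenvalues `0 ≤ ρ₁ ≤ ρ₂` (encoded via trace and determinant),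
`inf_{A ∈ S(ε)} A : N = (1-ε)ρ₁ + ερ₂` and in particular `ε|N| ≤ inf`. -/
theorem stmt11 (ε : ℝ) (hε : 0 < ε) (hε' : ε ≤ 1 / 2)
    (N : Matrix (Fin 2) (Fin 2) ℝ) (hN : N.PosSemidef)
    (ρ₁ ρ₂ : ℝ) (h0 : 0 ≤ ρ₁) (h12 : ρ₁ ≤ ρ₂)
    (htr : N.trace = ρ₁ + ρ₂) (hdet : N.det = ρ₁ * ρ₂) :
    sInf ((fun A => finner A N) '' Sset ε) = (1 - ε) * ρ₁ + ε * ρ₂ ∧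
    ε * frob N ≤ sInf ((fun A => finner A N) '' Sset ε) := by
  obtain ⟨p, hp_def⟩ : ∃ x, N 0 0 = x := ⟨_, rfl⟩
  obtain ⟨q, hq_def⟩ : ∃ x, N 0 1 = x := ⟨_, rfl⟩
  obtain ⟨r, hr_def⟩ : ∃ x, N 1 1 = x := ⟨_, rfl⟩
  have hqs : N 1 0 = q := by rw [psd_sym hN, hq_def]
  have htr' : p + r = ρ₁ + ρ₂ := by
    have h := htr
    simp [Matrix.trace, Matrix.diag, Fin.sum_univ_two, hp_def, hr_def] at h
    linarith [h]
  have hdet' : p * r - q^2 = ρ₁ * ρ₂ := by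
    have h := hdet
    rw [Matrix.det_fin_two, hp_def, hq_def, hr_def, hqs] at h
    nlinarith [h]
  have hp0 : 0 ≤ p := by
    have h := psd_quad hN 1 0; rw [hp_def] at h; nlinarith [h]
  have hr0 : 0 ≤ r := by
    have h := psd_quad hN 0 1; rw [hr_def] at h; nlinarith [h]
  obtain ⟨u, hu_def⟩ : ∃ x, x = p - ρ₁ := ⟨_, rfl⟩
  obtain ⟨w, hw_def⟩ : ∃ x, x = r - ρ₁ := ⟨_, rfl⟩
  have huw : u * w = q^2 := by
    rw [hu_def, hw_def]; linear_combination hdet' - ρ₁ * htr'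
  have hsum : u + w = ρ₂ - ρ₁ := by rw [hu_def, hw_def]; linarith
  have hu0 : 0 ≤ u := by nlinarith [sq_nonneg q, huw, hsum, h12, sq_nonneg u]
  have hw0 : 0 ≤ w := by nlinarith [sq_nonneg q, huw, hsum, h12, sq_nonneg w]
  have h2ε : 0 ≤ 1 - 2 * ε := by linarith
  have hfinN : ∀ B : Matrix (Fin 2) (Fin 2) ℝ,
      finner B N = B 0 0 * p + B 0 1 * q + B 1 0 * q + B 1 1 * r := by
    intro B
    simp only [finner, Fin.sum_univ_two, hqs, hp_def, hq_def, hr_def]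
    ring
  -- lower bound
  have key : ∀ y ∈ (fun A => finner A N) '' Sset ε, (1 - ε) * ρ₁ + ε * ρ₂ ≤ y := by
    rintro y ⟨A, ⟨hA1, hA2, hA3⟩, rfl⟩
    have hAs : A 1 0 = A 0 1 := psd_sym hA1
    have htrA : A 0 0 + A 1 1 = 1 := by
      have h := hA2
      simp [Matrix.trace, Matrix.diag, Fin.sum_univ_two] at h
      linarith [h]
    have e00 : (A - ε • (1 : Matrix (Fin 2) (Fin 2) ℝ)) 0 0 = A 0 0 - ε := by
      simp [Matrix.sub_apply, Matrix.smul_apply, Matrix.one_apply]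
    have e11 : (A - ε • (1 : Matrix (Fin 2) (Fin 2) ℝ)) 1 1 = A 1 1 - ε := by
      simp [Matrix.sub_apply, Matrix.smul_apply, Matrix.one_apply]
    have e01 : (A - ε • (1 : Matrix (Fin 2) (Fin 2) ℝ)) 0 1 = A 0 1 := by
      simp [Matrix.sub_apply, Matrix.smul_apply, Matrix.one_apply]
    have hs : 0 ≤ A 0 0 - ε := by
      have h := psd_quad hA3 1 0; rw [e00] at h; nlinarith [h]
    have ht : 0 ≤ A 1 1 - ε := by
      have h := psd_quad hA3 0 1; rw [e11] at h; nlinarith [h]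
    have hb2 : (A 0 1)^2 ≤ (A 0 0 - ε) * (A 1 1 - ε) := by
      have h := psd_det hA3; rw [e00, e11, e01] at h; exact h
    simp only []
    rw [hfinN A, hAs]
    have hT : ((A 0 1) * q)^2 ≤ ((A 0 0 - ε) * u) * ((A 1 1 - ε) * w) := by
      have h1 : (A 0 1)^2 * q^2 ≤ ((A 0 0 - ε) * (A 1 1 - ε)) * q^2 :=
        mul_le_mul_of_nonneg_right hb2 (sq_nonneg q)
      calc ((A 0 1) * q)^2 = (A 0 1)^2 * q^2 := by ring
        _ ≤ ((A 0 0 - ε) * (A 1 1 - ε)) * q^2 := h1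
        _ = ((A 0 0 - ε) * u) * ((A 1 1 - ε) * w) := by rw [← huw]; ring
    have hkey : 0 ≤ (A 0 0 - ε) * u + (A 1 1 - ε) * w + 2 * (A 0 1) * q := by
      nlinarith [hT, mul_nonneg hs hu0, mul_nonneg ht hw0,
        sq_nonneg ((A 0 0 - ε) * u - (A 1 1 - ε) * w),
        sq_nonneg ((A 0 0 - ε) * u + (A 1 1 - ε) * w + 2 * (A 0 1) * q)]
    have e2 : A 0 0 * p + A 0 1 * q + A 0 1 * q + A 1 1 * r - ((1 - ε) * ρ₁ + ε * ρ₂) =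
        (A 0 0 - ε) * u + (A 1 1 - ε) * w + 2 * (A 0 1) * q := by
      rw [hu_def, hw_def]
      linear_combination ρ₁ * htrA + ε * htr'
    linarith [hkey, e2]
  -- the minimizer
  have hmem : ((1 - ε) * ρ₁ + ε * ρ₂) ∈ (fun A => finner A N) '' Sset ε := by
    by_cases hd : ρ₂ - ρ₁ = 0
    · refine ⟨!![(1:ℝ)/2, 0; 0, 1/2], ⟨?_, ?_, ?_⟩, ?_⟩
      · apply psd_of <;> norm_num
      · simp [Matrix.trace, Matrix.diag, Fin.sum_univ_two]; norm_num
      · apply psd_of <;> simp [Matrix.sub_apply, Matrix.smul_apply, Matrix.one_apply] <;>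
          nlinarith [hε, hε']
      · simp only []
        rw [hfinN]
        norm_num
        linear_combination (1/2)*htr' + (1/2-ε)*hd
    · have hd0' : 0 < ρ₂ - ρ₁ := lt_of_le_of_ne (by linarith) (Ne.symm hd)
      obtain ⟨dd, hd_def⟩ : ∃ x, x = ρ₂ - ρ₁ := ⟨_, rfl⟩
      have hd0 : 0 < dd := by rw [hd_def]; exact hd0'
      have hne : dd ≠ 0 := ne_of_gt hd0
      have hsum' : u + w = dd := by rw [hd_def]; exact hsum
      refine ⟨!![ε + (1-2*ε)*w/dd, -((1-2*ε)*q/dd); -((1-2*ε)*q/dd), ε + (1-2*ε)*u/dd],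
        ⟨?_, ?_, ?_⟩, ?_⟩
      · apply psd_of
        · norm_num
        · have h : (0:ℝ) ≤ ε + (1-2*ε)*w/dd :=
            add_nonneg hε.le (div_nonneg (mul_nonneg h2ε hw0) hd0.le)
          simpa using h
        · have h : (0:ℝ) ≤ ε + (1-2*ε)*u/dd :=
            add_nonneg hε.le (div_nonneg (mul_nonneg h2ε hu0) hd0.le)
          simpa using h
        · have hgoal : (-((1-2*ε)*q/dd))^2 ≤ (ε + (1-2*ε)*w/dd) * (ε + (1-2*ε)*u/dd) := by
            have e : (-((1-2*ε)*q/dd))^2 = (1-2*ε)^2*q^2/dd^2 := by ring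
            have e2 : (ε + (1-2*ε)*w/dd) * (ε + (1-2*ε)*u/dd)
                = (1-2*ε)^2*(u*w)/dd^2 + (ε^2 + ε*(1-2*ε)*((u+w)/dd)) := by ring
            rw [e, e2, huw, hsum']
            rw [div_self hne]
            nlinarith [sq_nonneg ε, mul_nonneg hε.le h2ε]
          simpa using hgoal
      · simp [Matrix.trace, Matrix.diag, Fin.sum_univ_two]
        field_simp
        linear_combination (1-2*ε) * hsum'
      · apply psd_of
        · simp [Matrix.sub_apply, Matrix.smul_apply, Matrix.one_apply]
        · have h : (0:ℝ) ≤ (1-2*ε)*w/dd := div_nonneg (mul_nonneg h2ε hw0) hd0.le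
          simpa [Matrix.sub_apply, Matrix.smul_apply, Matrix.one_apply] using h
        · have h : (0:ℝ) ≤ (1-2*ε)*u/dd := div_nonneg (mul_nonneg h2ε hu0) hd0.le
          simpa [Matrix.sub_apply, Matrix.smul_apply, Matrix.one_apply] using h
        · have hgoal : (-((1-2*ε)*q/dd))^2 ≤ (ε + (1-2*ε)*w/dd - ε) * (ε + (1-2*ε)*u/dd - ε) := by
            have e : (-((1-2*ε)*q/dd))^2 = (1-2*ε)^2*q^2/dd^2 := by ring
            have e2 : (ε + (1-2*ε)*w/dd - ε) * (ε + (1-2*ε)*u/dd - ε)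
                = (1-2*ε)^2*(u*w)/dd^2 := by ring
            rw [e, e2, huw]
          simpa [Matrix.sub_apply, Matrix.smul_apply, Matrix.one_apply] using hgoal
      · simp only []
        rw [hfinN]
        have hgoal : (ε + (1-2*ε)*w/dd)*p + (-((1-2*ε)*q/dd))*q + (-((1-2*ε)*q/dd))*q
            + (ε + (1-2*ε)*u/dd)*r = (1-ε)*ρ₁+ε*ρ₂ := by
          field_simp
          linear_combination (ε*dd - (1-2*ε)*ρ₁) * htr' + (2*(1-2*ε)) * hdet'
            + (1-2*ε)*p*hw_def + (1-2*ε)*r*hu_def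
            + ((1-ε)*ρ₁+ε*ρ₂ - ε*(ρ₁+ρ₂))*hd_def + 2*ρ₁*(2*ε-1)*hd_def
        calc _ = (ε + (1-2*ε)*w/dd)*p + (-((1-2*ε)*q/dd))*q + (-((1-2*ε)*q/dd))*q
            + (ε + (1-2*ε)*u/dd)*r := by norm_num; try ring
          _ = (1-ε)*ρ₁+ε*ρ₂ := hgoal
  have hbdd : BddBelow ((fun A => finner A N) '' Sset ε) :=
    ⟨(1 - ε) * ρ₁ + ε * ρ₂, fun y hy => key y hy⟩
  have heq : sInf ((fun A => finner A N) '' Sset ε) = (1 - ε) * ρ₁ + ε * ρ₂ :=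
    le_antisymm (csInf_le hbdd hmem) (le_csInf ⟨_, hmem⟩ key)
  refine ⟨heq, ?_⟩
  rw [heq]
  have hfr : frob N = Real.sqrt (p^2 + q^2 + (q^2 + r^2)) := by
    simp only [frob, Fin.sum_univ_two, hqs, hp_def, hq_def, hr_def]
  have hle : frob N ≤ p + r := by
    rw [hfr]
    rw [show p + r = Real.sqrt ((p+r)^2) from (Real.sqrt_sq (by linarith)).symm]
    apply Real.sqrt_le_sqrt
    nlinarith [hdet', mul_nonneg h0 (le_trans h0 h12)]
  have hfr0 : 0 ≤ frob N := Real.sqrt_nonneg _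
  nlinarith [hle, hfr0, hε, h2ε, h0, htr']
end

section
/- Let H be a real Hilbert space and A: H → H* a map that is strongly monotone (⟨Av - Aw, v - w⟩ ≥ c‖v - w‖² for some c > 0) and Lipschitz continuous (‖Av - Aw‖_{H*} ≤ L‖v - w‖). Then there exists a unique v ∈ H with Av = 0. -/
/-!
Identify `H*` with `H` by the Riesz map `J`, so that `B := J ∘ A` is strongly monotone and
Lipschitz on `H`. For `t = c / L²` (after enlarging `L` to at least `c`) one has
`‖(v - t B v) - (w - t B w)‖² ≤ (1 - 2tc + t²L²) ‖v - w‖² = (1 - c²/L²) ‖v - w‖²`,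
so `v ↦ v - t B v` is a contraction whose fixed points are exactly the zeros of `B`;
Banach's fixed point theorem gives existence and uniqueness.
-/

open InnerProductSpace

section StronglyMonotone

variable {E : Type*} [NormedAddCommGroup E] [InnerProductSpace ℝ E] {B : E → E} {c L : ℝ}

theorem norm_sub_smul_sub_sq_le {t : ℝ} (ht : 0 ≤ t)
    (hmon : ∀ v w, c * ‖v - w‖ ^ 2 ≤ ⟪B v - B w, v - w⟫_ℝ)
    (hlip : ∀ v w, ‖B v - B w‖ ≤ L * ‖v - w‖) (v w : E) :
    ‖(v - t • B v) - (w - t • B w)‖ ^ 2 ≤ (1 - 2 * t * c + t ^ 2 * L ^ 2) * ‖v - w‖ ^ 2 := by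
  have hsq : ‖B v - B w‖ ^ 2 ≤ L ^ 2 * ‖v - w‖ ^ 2 := by
    rw [← mul_pow]
    exact pow_le_pow_left₀ (norm_nonneg _) (hlip v w) 2
  calc ‖(v - t • B v) - (w - t • B w)‖ ^ 2
      = ‖v - w‖ ^ 2 - 2 * t * ⟪B v - B w, v - w⟫_ℝ + t ^ 2 * ‖B v - B w‖ ^ 2 := by
        rw [show (v - t • B v) - (w - t • B w) = (v - w) - t • (B v - B w) by module,
          norm_sub_sq_real, real_inner_smul_right, real_inner_comm, norm_smul,
          Real.norm_of_nonneg ht]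
        ring
    _ ≤ (1 - 2 * t * c + t ^ 2 * L ^ 2) * ‖v - w‖ ^ 2 := by
        linarith [mul_le_mul_of_nonneg_left (hmon v w) ht,
          mul_le_mul_of_nonneg_left hsq (sq_nonneg t)]

theorem contractingWith_sub_smul_of_strongMonotone (hc : 0 < c) (hcL : c ≤ L)
    (hmon : ∀ v w, c * ‖v - w‖ ^ 2 ≤ ⟪B v - B w, v - w⟫_ℝ)
    (hlip : ∀ v w, ‖B v - B w‖ ≤ L * ‖v - w‖) :
    ContractingWith (√(1 - (c / L) ^ 2)).toNNReal (fun v => v - (c / L ^ 2) • B v) := by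
  have hL : 0 < L := hc.trans_le hcL
  have hq : 1 - 2 * (c / L ^ 2) * c + (c / L ^ 2) ^ 2 * L ^ 2 = 1 - (c / L) ^ 2 := by
    field_simp
    ring
  refine ⟨?_, LipschitzWith.of_dist_le_mul fun v w => ?_⟩
  · rw [Real.toNNReal_lt_one, Real.sqrt_lt' one_pos, one_pow, sub_lt_self_iff]
    positivity
  · have hsq := norm_sub_smul_sub_sq_le (t := c / L ^ 2) (by positivity) hmon hlip v w
    rw [hq] at hsq
    rw [dist_eq_norm, dist_eq_norm, Real.coe_toNNReal _ (Real.sqrt_nonneg _)]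
    calc ‖(v - (c / L ^ 2) • B v) - (w - (c / L ^ 2) • B w)‖
        = √(‖(v - (c / L ^ 2) • B v) - (w - (c / L ^ 2) • B w)‖ ^ 2) :=
          (Real.sqrt_sq (norm_nonneg _)).symm
      _ ≤ √((1 - (c / L) ^ 2) * ‖v - w‖ ^ 2) := Real.sqrt_le_sqrt hsq
      _ = √(1 - (c / L) ^ 2) * ‖v - w‖ := by
          rw [Real.sqrt_mul' _ (sq_nonneg _), Real.sqrt_sq (norm_nonneg _)]

theorem existsUnique_eq_zero_of_strongMonotone [CompleteSpace E] (hc : 0 < c)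
    (hmon : ∀ v w, c * ‖v - w‖ ^ 2 ≤ ⟪B v - B w, v - w⟫_ℝ)
    (hlip : ∀ v w, ‖B v - B w‖ ≤ L * ‖v - w‖) :
    ∃! v, B v = 0 := by
  have hlip' : ∀ v w, ‖B v - B w‖ ≤ max L c * ‖v - w‖ := fun v w =>
    (hlip v w).trans (mul_le_mul_of_nonneg_right (le_max_left L c) (norm_nonneg _))
  have hf := contractingWith_sub_smul_of_strongMonotone hc (le_max_right L c) hmon hlip'
  have ht : c / max L c ^ 2 ≠ 0 := (div_pos hc (by positivity)).ne'
  have hfix : ∀ v, Function.IsFixedPt (fun v => v - (c / max L c ^ 2) • B v) v ↔ B v = 0 :=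
    fun v => by simp [Function.IsFixedPt, ht]
  have : Nonempty E := ⟨0⟩
  exact ⟨hf.fixedPoint _, (hfix _).1 hf.fixedPoint_isFixedPt,
    fun w hw => hf.fixedPoint_unique ((hfix w).2 hw)⟩

end StronglyMonotone

/-- Browder–Minty: a strongly monotone Lipschitz operator from a real Hilbert
space to its dual has a unique zero. -/
theorem stmt16 (H : Type*) [NormedAddCommGroup H] [InnerProductSpace ℝ H]
    [CompleteSpace H]
    (A : H → StrongDual ℝ H) (c L : ℝ) (hc : 0 < c)
    (hmon : ∀ v w : H, c * ‖v - w‖ ^ 2 ≤ (A v - A w) (v - w))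
    (hlip : ∀ v w : H, ‖A v - A w‖ ≤ L * ‖v - w‖) :
    ∃! v : H, A v = 0 := by
  set J := (toDual ℝ H).symm
  have hmonJ : ∀ v w, c * ‖v - w‖ ^ 2 ≤ ⟪J (A v) - J (A w), v - w⟫_ℝ := fun v w => by
    rw [← map_sub, toDual_symm_apply]
    exact hmon v w
  have hlipJ : ∀ v w, ‖J (A v) - J (A w)‖ ≤ L * ‖v - w‖ := fun v w => by
    rw [← map_sub, LinearIsometryEquiv.norm_map]
    exact hlip v w
  simpa only [map_eq_zero_iff J J.injective] using
    existsUnique_eq_zero_of_strongMonotone hc hmonJ hlipJ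
end
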